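/- arXiv:math/0612006 — 2 statements merged into one kernel-verified Lean document; each statement's English description precedes it below -/
import Mathlib

section
/- For every integer v ≥ 5 and every integer d with 4 ≤ d ≤ min(v, 10), there exist v distinct points q₁, ..., q_v ∈ ℂ² such that the span of the vectors q̂₁, ..., q̂_v in ℂ^10 has dimension exactly d. -/
/-!
Take the first `d` points of the triangular grid `{(a, b) ∈ ℕ² | a + b ≤ 3}`, ordered so that the
four points on the `x`-axis come first, and complete them by further points `(i, 0)` of the
`x`-axis. The ten grid points are unisolvent for plane cubics, so their Veronese vectors are
linearly independent; and a cubic restricted to the `x`-axis is a univariate cubic, so by Lagrange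
interpolation at `0, 1, 2, 3` the Veronese vector of every point of the `x`-axis lies in the span of
those of the four grid points on it.
-/

/-- The affine cubic Veronese embedding of a point of `ℂ²`. -/
noncomputable def vhat (q : ℂ × ℂ) : Fin 10 → ℂ :=
  ![1, q.1, q.2, q.1 ^ 2, q.1 * q.2, q.2 ^ 2, q.1 ^ 3, q.1 ^ 2 * q.2, q.1 * q.2 ^ 2, q.2 ^ 3]

open Submodule Set

theorem finrank_span_range_eq_card_of_mem_span {K V ι κ : Type*} [DivisionRing K]
    [AddCommGroup V] [Module K V] [Fintype κ] {f : ι → V} {e : κ → ι}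
    (hli : LinearIndependent K (f ∘ e)) (hmem : ∀ i, f i ∈ span K (range (f ∘ e))) :
    Module.finrank K (span K (range f)) = Fintype.card κ := by
  have hspan : span K (range (f ∘ e)) = span K (range f) :=
    span_eq_of_le _ (range_comp_subset_range e f |>.trans subset_span)
      (span_le.mpr <| range_subset_iff.mpr hmem)
  rw [← hspan, finrank_span_eq_card hli]

def gridCoord : Fin 10 → ℕ × ℕ :=
  ![(0, 0), (1, 0), (2, 0), (3, 0), (0, 1), (0, 2), (0, 3), (1, 1), (2, 1), (1, 2)]

theorem gridCoord_injective : Function.Injective gridCoord := by decide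

theorem gridCoord_fst_le_three (k : Fin 10) : (gridCoord k).1 ≤ 3 := by
  revert k; decide

theorem gridCoord_of_le_three (k : Fin 10) (hk : (k : ℕ) ≤ 3) : gridCoord k = ((k : ℕ), 0) := by
  revert k; decide

theorem linearIndependent_vhat_gridCoord :
    LinearIndependent ℂ fun k => vhat (Prod.map Nat.cast Nat.cast (gridCoord k)) := by
  rw [Fintype.linearIndependent_iff]
  intro g hg
  have h := fun j => congrFun hg j
  simp only [vhat, gridCoord, Prod.map_fst, Prod.map_snd, Matrix.smul_cons, smul_eq_mul, mul_one,
    Matrix.smul_empty, Finset.sum_apply, Fin.sum_univ_succ, Fin.isValue, Matrix.cons_val_zero,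
    CharP.cast_eq_zero, mul_zero, ne_eq, OfNat.ofNat_ne_zero, not_false_eq_true, zero_pow,
    Matrix.cons_val_succ, Fin.succ_zero_eq_one, Nat.cast_one, one_pow, Fin.succ_one_eq_two,
    Nat.cast_ofNat, Fin.reduceSucc, zero_mul, Finset.univ_unique, Fin.default_eq_zero,
    Matrix.cons_val_fin_one, one_mul, Finset.sum_singleton, Pi.zero_apply, Fin.forall_fin_succ,
    zero_add, forall_const] at h
  obtain ⟨h0, h1, h2, h3, h4, h5, h6, h7, h8, h9⟩ := h
  intro k
  -- The coefficients are the columns of the inverse of the matrix with rows `vhat (gridCoord k)`.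
  fin_cases k
  · show g 0 = 0
    linear_combination h0 - 11/6 * h1 - 11/6 * h2 + h3 + 2 * h4 + h5 - 1/6 * h6 - 1/2 * h7
      - 1/2 * h8 - 1/6 * h9
  · show g 1 = 0
    linear_combination 3 * h1 - 5/2 * h3 - 5/2 * h4 + 1/2 * h6 + h7 + 1/2 * h8
  · show g 2 = 0
    linear_combination -3/2 * h1 + 2 * h3 + 1/2 * h4 - 1/2 * h6 - 1/2 * h7
  · show g 3 = 0
    linear_combination 1/3 * h1 - 1/2 * h3 + 1/6 * h6
  · show g 4 = 0
    linear_combination 3 * h2 - 5/2 * h4 - 5/2 * h5 + 1/2 * h7 + h8 + 1/2 * h9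
  · show g 5 = 0
    linear_combination -3/2 * h2 + 1/2 * h4 + 2 * h5 - 1/2 * h8 - 1/2 * h9
  · show g 6 = 0
    linear_combination 1/3 * h2 - 1/2 * h5 + 1/6 * h9
  · show g 7 = 0
    linear_combination 3 * h4 - h7 - h8
  · show g 8 = 0
    linear_combination -1/2 * h4 + 1/2 * h7
  · show g 9 = 0
    linear_combination -1/2 * h4 + 1/2 * h8

theorem vhat_axis_eq_lagrange (t : ℂ) : vhat (t, 0) =
    (-(t - 1) * (t - 2) * (t - 3) / 6) • vhat (0, 0) + (t * (t - 2) * (t - 3) / 2) • vhat (1, 0)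
      + (-t * (t - 1) * (t - 3) / 2) • vhat (2, 0) + (t * (t - 1) * (t - 2) / 6) • vhat (3, 0) := by
  ext j
  fin_cases j <;> simp [vhat] <;> ring

theorem vhat_axis_mem {p : Submodule ℂ (Fin 10 → ℂ)} (hp : ∀ n : ℕ, n ≤ 3 → vhat (n, 0) ∈ p)
    (t : ℂ) : vhat (t, 0) ∈ p := by
  have h0 : vhat (0, 0) ∈ p := by simpa using hp 0 (by norm_num)
  have h1 : vhat (1, 0) ∈ p := by simpa using hp 1 (by norm_num)
  have h2 : vhat (2, 0) ∈ p := by simpa using hp 2 (by norm_num)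
  have h3 : vhat (3, 0) ∈ p := by simpa using hp 3 (by norm_num)
  rw [vhat_axis_eq_lagrange]
  exact add_mem (add_mem (add_mem (smul_mem _ _ h0) (smul_mem _ _ h1)) (smul_mem _ _ h2))
    (smul_mem _ _ h3)

def gridConfig (d : ℕ) (hd : d ≤ 10) (v : ℕ) (i : Fin v) : ℕ × ℕ :=
  if h : (i : ℕ) < d then gridCoord ⟨i, h.trans_le hd⟩ else (i, 0)

theorem gridConfig_injective {d : ℕ} (hd4 : 4 ≤ d) (hd : d ≤ 10) (v : ℕ) :
    Function.Injective (gridConfig d hd v) := by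
  intro i j hij
  unfold gridConfig at hij
  split_ifs at hij with hi hj hj
  · exact Fin.ext (Fin.mk.inj (gridCoord_injective hij))
  · have := gridCoord_fst_le_three ⟨i, hi.trans_le hd⟩
    rw [hij] at this
    omega
  · have := gridCoord_fst_le_three ⟨j, hj.trans_le hd⟩
    rw [← hij] at this
    omega
  · exact Fin.ext (congrArg Prod.fst hij)

theorem finrank_span_vhat_gridConfig {d v : ℕ} (hd4 : 4 ≤ d) (hd : d ≤ 10) (hdv : d ≤ v) :
    Module.finrank ℂ (span ℂ (range fun i => vhat (Prod.map Nat.cast Nat.cast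
      (gridConfig d hd v i)))) = d := by
  have hfirst (k : Fin d) : gridConfig d hd v (Fin.castLE hdv k) = gridCoord (Fin.castLE hd k) :=
    dif_pos k.isLt
  refine (finrank_span_range_eq_card_of_mem_span (e := Fin.castLE hdv) ?_ fun i => ?_).trans
    (Fintype.card_fin d)
  · have hcomp : (fun i => vhat (Prod.map Nat.cast Nat.cast (gridConfig d hd v i))) ∘
        Fin.castLE hdv = (fun k => vhat (Prod.map Nat.cast Nat.cast (gridCoord k))) ∘
        Fin.castLE hd := funext fun k => by simp only [Function.comp_apply, hfirst]
    rw [hcomp]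
    exact linearIndependent_vhat_gridCoord.comp _ (Fin.castLE_injective hd)
  · by_cases hi : (i : ℕ) < d
    · exact subset_span ⟨⟨i, hi⟩, rfl⟩
    · have hi' : gridConfig d hd v i = ((i : ℕ), 0) := dif_neg hi
      simp only [hi', Prod.map_apply, Nat.cast_zero]
      refine vhat_axis_mem (fun n hn => ?_) _
      refine subset_span ⟨⟨n, by omega⟩, ?_⟩
      simp only [Function.comp_apply, hfirst]
      rw [gridCoord_of_le_three _ hn]
      simp

theorem stmt7_general (v : ℕ) (d : ℕ) (hd4 : 4 ≤ d) (hd : d ≤ min v 10) :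
    ∃ q : Fin v → ℂ × ℂ, Function.Injective q ∧
      Module.finrank ℂ (Submodule.span ℂ (Set.range fun i => vhat (q i))) = d := by
  obtain ⟨hdv, hd10⟩ := le_min_iff.mp hd
  exact ⟨_, (Nat.cast_injective.prodMap Nat.cast_injective).comp (gridConfig_injective hd4 hd10 v),
    finrank_span_vhat_gridConfig hd4 hd10 hdv⟩

/-- For every `v ≥ 5` and `4 ≤ d ≤ min v 10` there are `v` distinct points of `ℂ²` whose
Veronese vectors span a subspace of dimension exactly `d`. -/
theorem stmt7 (v : ℕ) (hv : 5 ≤ v) (d : ℕ) (hd4 : 4 ≤ d) (hd : d ≤ min v 10) :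
    ∃ q : Fin v → ℂ × ℂ, Function.Injective q ∧
      Module.finrank ℂ (Submodule.span ℂ (Set.range fun i => vhat (q i))) = d :=
  stmt7_general v d hd4 hd
end

section
/- Let v ≥ 5 and let max(10 − v, 0) ≤ s ≤ 6 be an integer. Then there exist v distinct points q₁, ..., q_v ∈ ℂ² such that the space of complex polynomials of total degree at most 3 vanishing at all q_i has dimension exactly s. -/
/-!
Evaluation at the points of the triangular grid `{(a, b) : a + b ≤ n}` is dual to the Lagrange
polynomials `L_(a,b) = ∏_{i<a} (x - i) · ∏_{j<b} (y - j) · ∏_{l<n-a-b} (n - l - x - y)` (up to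
nonzero scalars), and by a dimension count these span the polynomials of degree `≤ n`. Hence the
cubics vanishing at a set `S` of points of the cubic grid are spanned by the `L_p` with `p ∉ S`.
Take for `S` the four grid points on the line `y = 0` together with `6 - s` further grid points,
and add further points of that line until there are `v` points: every `L_p` with `p` off the line
is divisible by `y`, so these extra points impose no new condition, and the dimension stays `s`.
-/

open MvPolynomial Finset Module Submodule

section DualFamily

variable {K M ι : Type*} [Field K] [AddCommGroup M] [Module K M] {φ : ι → M →ₗ[K] K}
  {L : ι → M}

theorem eq_zero_of_apply_sum_smul_eq_zero (h : ∀ i j, φ i (L j) = 0 ↔ i ≠ j) {s : Finset ι}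
    {c : ι → K} {i : ι} (hi : i ∈ s) (h0 : φ i (∑ j ∈ s, c j • L j) = 0) : c i = 0 := by
  rw [map_sum, sum_eq_single i (fun j _ hji => by simp [(h i j).2 (Ne.symm hji)])
    (fun his => absurd hi his), map_smul, smul_eq_mul] at h0
  exact (mul_eq_zero.1 h0).resolve_right fun hii => (h i i).1 hii rfl

theorem linearIndependent_of_apply_eq_zero_iff (h : ∀ i j, φ i (L j) = 0 ↔ i ≠ j) :
    LinearIndependent K L :=
  linearIndependent_iff'.2 fun _ _ hs _ hi =>
    eq_zero_of_apply_sum_smul_eq_zero h hi (by rw [hs, map_zero])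

theorem mem_span_image_of_apply_eq_zero [Fintype ι] (h : ∀ i j, φ i (L j) = 0 ↔ i ≠ j)
    {T : Set ι} {f : M} (hf : f ∈ span K (Set.range L)) (hT : ∀ i ∉ T, φ i f = 0) :
    f ∈ span K (L '' T) := by
  obtain ⟨c, rfl⟩ := (mem_span_range_iff_exists_fun K).1 hf
  refine sum_mem fun i _ => ?_
  by_cases hi : i ∈ T
  · exact smul_mem _ _ (subset_span ⟨i, hi, rfl⟩)
  · simp [eq_zero_of_apply_sum_smul_eq_zero h (mem_univ i) (hT i hi)]

theorem finrank_eq_card_of_apply_eq_zero_iff [Fintype ι] {V W : Submodule K M}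
    [FiniteDimensional K V] (hL : ∀ i, L i ∈ V) (h : ∀ i j, φ i (L j) = 0 ↔ i ≠ j)
    (hcard : finrank K V ≤ Fintype.card ι) (T : Finset ι) (hTW : ∀ i ∈ T, L i ∈ W)
    (hWV : W ≤ V) (hW : ∀ f ∈ W, ∀ i ∉ T, φ i f = 0) : finrank K W = T.card := by
  have hli := linearIndependent_of_apply_eq_zero_iff h
  have hV : span K (Set.range L) = V :=
    eq_of_le_of_finrank_le (span_le.2 (Set.range_subset_iff.2 hL))
      (by rwa [finrank_span_eq_card hli])
  have hWT : W = span K (L '' T) := by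
    refine le_antisymm (fun f hf => mem_span_image_of_apply_eq_zero h ?_ (hW f hf)) ?_
    · exact hV ▸ hWV hf
    · exact span_le.2 (by rintro _ ⟨i, hi, rfl⟩; exact hTW i hi)
  rw [hWT, Set.image_eq_range]
  exact (finrank_span_eq_card (hli.comp _ Subtype.val_injective)).trans (Fintype.card_coe T)

end DualFamily

section TriangularGrid

variable (K : Type*) [Field K]

def triangularGrid (n : ℕ) : Finset (ℕ × ℕ) :=
  (range (n + 1) ×ˢ range (n + 1)).filter fun p => p.1 + p.2 ≤ n

@[simp]
theorem mem_triangularGrid {n : ℕ} {p : ℕ × ℕ} : p ∈ triangularGrid n ↔ p.1 + p.2 ≤ n := by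
  simp only [triangularGrid, mem_filter, mem_product, mem_range]
  omega

noncomputable def gridLagrange (n : ℕ) (p : ℕ × ℕ) : MvPolynomial (Fin 2) K :=
  (∏ i ∈ range p.1, (X 0 - C (i : K))) * (∏ j ∈ range p.2, (X 1 - C (j : K))) *
    ∏ l ∈ range (n - p.1 - p.2), (C ((n : K) - l) - X 0 - X 1)

variable {K}

theorem aeval_gridLagrange (n : ℕ) (p : ℕ × ℕ) (x : Fin 2 → K) :
    aeval x (gridLagrange K n p) = (∏ i ∈ range p.1, (x 0 - i)) * (∏ j ∈ range p.2, (x 1 - j)) *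
      ∏ l ∈ range (n - p.1 - p.2), ((n : K) - l - x 0 - x 1) := by
  simp [gridLagrange]

theorem totalDegree_prod_le_card {σ α : Type*} {s : Finset α} {f : α → MvPolynomial σ K}
    (hf : ∀ a ∈ s, (f a).totalDegree ≤ 1) : (∏ a ∈ s, f a).totalDegree ≤ s.card :=
  (totalDegree_finsetProd s f).trans (by simpa using sum_le_sum hf)

theorem gridLagrange_mem_restrictTotalDegree {n : ℕ} {p : ℕ × ℕ} (hp : p ∈ triangularGrid n) :
    gridLagrange K n p ∈ restrictTotalDegree (Fin 2) K n := by
  have hX (i : Fin 2) : (X i : MvPolynomial (Fin 2) K).totalDegree ≤ 1 := (totalDegree_X i).le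
  have hXC (i : Fin 2) (a : K) : (X i - C a : MvPolynomial (Fin 2) K).totalDegree ≤ 1 :=
    (totalDegree_sub_C_le _ _).trans (hX i)
  have hCXX (a : K) : (C a - X 0 - X 1 : MvPolynomial (Fin 2) K).totalDegree ≤ 1 :=
    (totalDegree_sub _ _).trans <| max_le ((totalDegree_sub _ _).trans <|
      max_le ((totalDegree_C a).trans_le zero_le_one) (hX 0)) (hX 1)
  rw [mem_restrictTotalDegree, gridLagrange]
  calc _ ≤ p.1 + p.2 + (n - p.1 - p.2) := by
        refine (totalDegree_mul _ _).trans <| add_le_add ((totalDegree_mul _ _).trans <|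
          add_le_add ?_ ?_) ?_
        · exact (totalDegree_prod_le_card fun _ _ => hXC 0 _).trans_eq (card_range _)
        · exact (totalDegree_prod_le_card fun _ _ => hXC 1 _).trans_eq (card_range _)
        · exact (totalDegree_prod_le_card fun _ _ => hCXX _).trans_eq (card_range _)
    _ = n := by rw [mem_triangularGrid] at hp; omega

theorem prod_range_natCast_sub_eq_zero_iff [CharZero K] {m a : ℕ} :
    ∏ i ∈ range a, ((m : K) - i) = 0 ↔ m < a := by
  simp [prod_eq_zero_iff, sub_eq_zero]

theorem aeval_gridLagrange_eq_zero_iff [CharZero K] {n : ℕ} {p q : ℕ × ℕ}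
    (hp : p ∈ triangularGrid n) (hq : q ∈ triangularGrid n) :
    aeval ![(q.1 : K), q.2] (gridLagrange K n p) = 0 ↔ q ≠ p := by
  rw [mem_triangularGrid] at hp hq
  obtain ⟨c, rfl⟩ := Nat.exists_eq_add_of_le hq
  have hc : ∀ l : ℕ, ((q.1 + q.2 + c : ℕ) : K) - l - q.1 - q.2 = (c : K) - l := by
    intro l; push_cast; ring
  simp only [aeval_gridLagrange, Matrix.cons_val_zero, Matrix.cons_val_one, hc, mul_eq_zero,
    prod_range_natCast_sub_eq_zero_iff, Ne, Prod.ext_iff]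
  omega

theorem aeval_gridLagrange_of_snd_pos {n : ℕ} {p : ℕ × ℕ} (hp : 0 < p.2) (x : K) :
    aeval ![x, 0] (gridLagrange K n p) = 0 := by
  rw [aeval_gridLagrange, prod_eq_zero (i := 0) (mem_range.2 hp) (by simp)]
  simp

theorem finrank_restrictTotalDegree_le (n : ℕ) :
    finrank K (restrictTotalDegree (Fin 2) K n) ≤ (triangularGrid n).card := by
  have hsum (d : Fin 2 →₀ ℕ) : (d.sum fun _ e => e) = d 0 + d 1 := by
    rw [Finsupp.sum_fintype _ _ fun _ => rfl, Fin.sum_univ_two]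
  rw [restrictTotalDegree, finrank_eq_nat_card_basis (basisRestrictSupport K _),
    ← Nat.card_eq_finsetCard]
  refine Nat.card_le_card_of_injective (fun d => ⟨(d.1 0, d.1 1), ?_⟩) fun d e hde => ?_
  · simpa [hsum] using d.2
  · simp only [Subtype.mk.injEq, Prod.mk.injEq] at hde
    ext i
    fin_cases i <;> simp [hde]

end TriangularGrid

section CubicConfiguration

def cubicGrid : Fin 10 → ℕ × ℕ :=
  ![(0, 0), (1, 0), (2, 0), (3, 0), (0, 1), (1, 1), (2, 1), (0, 2), (1, 2), (0, 3)]

theorem cubicGrid_mem (j : Fin 10) : cubicGrid j ∈ triangularGrid 3 := by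
  revert j; decide

theorem cubicGrid_injective : Function.Injective cubicGrid := by
  decide

theorem card_triangularGrid_three : (triangularGrid 3).card = 10 := by
  decide

theorem cubicGrid_of_lt_four {j : Fin 10} (hj : (j : ℕ) < 4) : cubicGrid j = ((j : ℕ), 0) := by
  revert j; decide

theorem cubicGrid_snd_pos {j : Fin 10} (hj : 4 ≤ (j : ℕ)) : 0 < (cubicGrid j).2 := by
  revert j; decide

theorem finrank_eq_card_of_cubicGrid {K : Type*} [Field K] [CharZero K]
    {W : Submodule K (MvPolynomial (Fin 2) K)} (T : Finset (Fin 10))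
    (hTW : ∀ j ∈ T, gridLagrange K 3 (cubicGrid j) ∈ W)
    (hWV : W ≤ restrictTotalDegree (Fin 2) K 3)
    (hW : ∀ f ∈ W, ∀ j ∉ T, aeval ![((cubicGrid j).1 : K), (cubicGrid j).2] f = 0) :
    finrank K W = T.card :=
  finrank_eq_card_of_apply_eq_zero_iff
    (φ := fun j => (aeval ![((cubicGrid j).1 : K), (cubicGrid j).2]).toLinearMap)
    (fun j => gridLagrange_mem_restrictTotalDegree (cubicGrid_mem j))
    (fun i j => (aeval_gridLagrange_eq_zero_iff (cubicGrid_mem j) (cubicGrid_mem i)).trans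
      cubicGrid_injective.ne_iff)
    ((finrank_restrictTotalDegree_le 3).trans_eq
      (by rw [card_triangularGrid_three, Fintype.card_fin]))
    T hTW hWV hW

theorem exists_cubic_configuration {m k : ℕ} (hm : 4 ≤ m) (hk : k ≤ 6) :
    ∃ q : Fin (m + k) → ℂ × ℂ, Function.Injective q ∧
      (∀ i, (q i).2 = 0 ∨
        ∃ j : Fin 10, (j : ℕ) < 4 + k ∧ q i = (((cubicGrid j).1 : ℂ), ((cubicGrid j).2 : ℂ))) ∧
      ∀ j : Fin 10, (j : ℕ) < 4 + k →
        ∃ i, q i = (((cubicGrid j).1 : ℂ), ((cubicGrid j).2 : ℂ)) := by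
  have hcast : Function.Injective fun p : ℕ × ℕ => ((p.1 : ℂ), (p.2 : ℂ)) :=
    fun p p' h => by simpa [Prod.ext_iff] using h
  let off (j : Fin k) : ℕ × ℕ := cubicGrid ⟨4 + j, by omega⟩
  have hoff (j : Fin k) : 0 < (off j).2 := cubicGrid_snd_pos (by simp)
  refine ⟨Fin.append (fun i => ((i : ℕ), 0)) (fun j => ((off j).1, (off j).2)),
    Fin.append_injective_iff.2 ⟨?_, ?_, ?_⟩, ?_, ?_⟩
  · intro i i' h
    simpa [Fin.ext_iff] using h
  · intro j j' h
    simpa [Fin.ext_iff, off] using cubicGrid_injective (hcast h)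
  · intro i j h
    have h2 : (0 : ℂ) = (off j).2 := congrArg Prod.snd h
    exact (hoff j).ne (by exact_mod_cast h2)
  · refine Fin.addCases (fun i => ?_) (fun j => ?_)
    · simp
    · exact Or.inr ⟨⟨4 + j, by omega⟩, by simp, by simp [off]⟩
  · intro j hj
    by_cases h4 : (j : ℕ) < 4
    · refine ⟨_, (Fin.append_left _ _ ⟨j, by omega⟩).trans ?_⟩
      simp [cubicGrid_of_lt_four h4]
    · refine ⟨_, (Fin.append_right _ _ ⟨j - 4, by omega⟩).trans ?_⟩
      have : (⟨4 + (j - 4), by omega⟩ : Fin 10) = j := Fin.ext (by simp only; omega)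
      simp only [off, this]

end CubicConfiguration

theorem stmt8_general (v s : ℕ) (hs1 : max (10 - v) 0 ≤ s) (hs2 : s ≤ 6) :
    ∃ q : Fin v → ℂ × ℂ, Function.Injective q ∧
      Module.finrank ℂ
        (((MvPolynomial.restrictTotalDegree (Fin 2) ℂ 3 :
            Submodule ℂ (MvPolynomial (Fin 2) ℂ)) ⊓
          ⨅ i : Fin v,
            LinearMap.ker ((MvPolynomial.aeval ![(q i).1, (q i).2]).toLinearMap :
              MvPolynomial (Fin 2) ℂ →ₗ[ℂ] ℂ) :
              Submodule ℂ (MvPolynomial (Fin 2) ℂ))) = s := by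
  obtain ⟨k, hk⟩ : ∃ k, s + k = 6 := ⟨6 - s, by omega⟩
  obtain ⟨m, rfl⟩ : ∃ m, v = m + k := ⟨v - k, by omega⟩
  obtain ⟨q, hq, hq_off, hq_onto⟩ :=
    exists_cubic_configuration (show 4 ≤ m by omega) (show k ≤ 6 by omega)
  refine ⟨q, hq, ?_⟩
  have hT : (({j | (j : ℕ) < 4 + k} : Finset (Fin 10))ᶜ).card = s := by
    rw [card_compl, Fin.card_filter_val_lt, Fintype.card_fin]
    omega
  rw [← hT]
  refine finrank_eq_card_of_cubicGrid _ (fun j hj => ?_) inf_le_left fun f hf j hj => ?_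
  · simp only [mem_compl, mem_filter, mem_univ, true_and, not_lt] at hj
    refine mem_inf.2 ⟨gridLagrange_mem_restrictTotalDegree (cubicGrid_mem j),
      (mem_iInf _).2 fun i => ?_⟩
    rw [LinearMap.mem_ker, AlgHom.toLinearMap_apply]
    rcases hq_off i with hi | ⟨j', hj', hi⟩ <;> rw [hi]
    · exact aeval_gridLagrange_of_snd_pos (cubicGrid_snd_pos (by omega)) _
    · exact (aeval_gridLagrange_eq_zero_iff (cubicGrid_mem j) (cubicGrid_mem j')).2
        (cubicGrid_injective.ne (by omega))
  · simp only [mem_compl, mem_filter, mem_univ, true_and, not_not] at hj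
    obtain ⟨i, hi⟩ := hq_onto j hj
    have := (mem_iInf _).1 (mem_inf.1 hf).2 i
    rwa [LinearMap.mem_ker, hi] at this

/-- For `v ≥ 5` and `max (10 - v) 0 ≤ s ≤ 6` there are `v` distinct points of `ℂ²` such that
the cubic polynomials vanishing at all of them form a space of dimension exactly `s`. -/
theorem stmt8 (v s : ℕ) (hv : 5 ≤ v) (hs1 : max (10 - v) 0 ≤ s) (hs2 : s ≤ 6) :
    ∃ q : Fin v → ℂ × ℂ, Function.Injective q ∧
      Module.finrank ℂ
        (((MvPolynomial.restrictTotalDegree (Fin 2) ℂ 3 :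
            Submodule ℂ (MvPolynomial (Fin 2) ℂ)) ⊓
          ⨅ i : Fin v,
            LinearMap.ker ((MvPolynomial.aeval ![(q i).1, (q i).2]).toLinearMap :
              MvPolynomial (Fin 2) ℂ →ₗ[ℂ] ℂ) :
              Submodule ℂ (MvPolynomial (Fin 2) ℂ))) = s :=
  stmt8_general v s hs1 hs2
end
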